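/- arXiv:1402.2794 — 6 statements merged into one kernel-verified Lean document; each statement's English description precedes it below -/
import Mathlib

section
/- Let F be a finite field with q elements and f(x) ∈ F[x] an irreducible monic polynomial of degree n. Then the number of n×n matrices over F whose characteristic polynomial equals f is ∏_{i=1}^{n-1} (q^n - q^i). -/
/-!
Let `K = F[X]/(f)`, a field of degree `n` over `F`, and `α` the class of `X`. Transporting
multiplication by `α` along an `F`-linear isomorphism `ψ : K ≃ Fⁿ` gives an endomorphism of `Fⁿ`
with characteristic polynomial `f`, and every such endomorphism `T` arises this way: by
Cayley–Hamilton `Fⁿ` is a `K`-module through `T`, and for any `v ≠ 0` the map `k ↦ k • v` is an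
isomorphism `K ≃ Fⁿ` for dimension reasons. Two isomorphisms give the same endomorphism iff they
differ by an automorphism of `K` commuting with multiplication by `α`; since `α` generates `K`,
these are the multiplications by units of `K`. Hence `|GL_n(F)| = #{M | χ_M = f} · (q ^ n - 1)`.
-/

open Polynomial Module

namespace LinearEquiv

variable {R M₁ M₂ M₃ : Type*} [CommSemiring R] [AddCommMonoid M₁] [Module R M₁]
  [AddCommMonoid M₂] [Module R M₂] [AddCommMonoid M₃] [Module R M₃]

def transEquiv (e : M₂ ≃ₗ[R] M₃) : (M₁ ≃ₗ[R] M₂) ≃ (M₁ ≃ₗ[R] M₃) where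
  toFun ψ := ψ.trans e
  invFun ψ := ψ.trans e.symm
  left_inv ψ := by ext; simp
  right_inv ψ := by ext; simp

theorem conj_eq_self_iff_commute (e : M₁ ≃ₗ[R] M₁) (f : Module.End R M₁) :
    e.conj f = f ↔ Commute (e : Module.End R M₁) f := by
  refine ⟨fun h ↦ LinearMap.ext fun x ↦ ?_, fun h ↦ LinearMap.ext fun x ↦ ?_⟩
  · simpa using LinearMap.congr_fun h (e x)
  · simpa using LinearMap.congr_fun h (e.symm x)

theorem conj_eq_conj_iff_commute (ψ ψ₀ : M₁ ≃ₗ[R] M₂) (f : Module.End R M₁) :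
    ψ.conj f = ψ₀.conj f ↔ Commute ((ψ.trans ψ₀.symm : M₁ ≃ₗ[R] M₁) : Module.End R M₁) f := by
  rw [← conj_eq_self_iff_commute, ← conj_trans, LinearEquiv.trans_apply,
    ← ψ₀.symm.conj.injective.eq_iff, conj_symm_conj]

end LinearEquiv

section Generator

variable {R K V : Type*} [CommSemiring R] [CommSemiring K] [Algebra R K] [AddCommMonoid V]
  [Module R V] {α : K}

theorem commute_lmul_of_commute_lmul_of_adjoin_eq_top (hα : Algebra.adjoin R {α} = ⊤)
    {g : Module.End R K} (hg : Commute g (Algebra.lmul R K α)) (k : K) :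
    Commute g (Algebra.lmul R K k) := by
  have hle : Algebra.adjoin R {Algebra.lmul R K α} ≤ Subalgebra.centralizer R {g} :=
    Algebra.adjoin_le <| Set.singleton_subset_iff.mpr <|
      (Subalgebra.mem_centralizer_iff R).mpr fun _ h ↦ (Set.mem_singleton_iff.mp h) ▸ hg
  have hk : Algebra.lmul R K k ∈ Algebra.adjoin R {Algebra.lmul R K α} := by
    rw [← AlgHom.map_adjoin_singleton, hα]
    exact Subalgebra.mem_map.mpr ⟨k, Algebra.mem_top, rfl⟩
  exact (Subalgebra.mem_centralizer_iff R).mp (hle hk) g rfl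

theorem apply_eq_apply_one_mul_of_commute_lmul (hα : Algebra.adjoin R {α} = ⊤)
    {g : Module.End R K} (hg : Commute g (Algebra.lmul R K α)) (k : K) : g k = g 1 * k := by
  simpa [mul_comm] using
    LinearMap.congr_fun (commute_lmul_of_commute_lmul_of_adjoin_eq_top hα hg k) 1

def unitsEquivCommuteLmul (hα : Algebra.adjoin R {α} = ⊤) :
    Kˣ ≃ {g : K ≃ₗ[R] K // Commute (g : Module.End R K) (Algebra.lmul R K α)} where
  toFun u := ⟨DistribMulAction.toLinearEquiv R K u, LinearMap.ext fun k ↦ by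
    simp [Units.smul_def, mul_left_comm]⟩
  invFun g :=
    have hg1 : g.1 1 * g.1.symm 1 = 1 := by
      simpa using (apply_eq_apply_one_mul_of_commute_lmul hα g.2 (g.1.symm 1)).symm
    ⟨g.1 1, g.1.symm 1, hg1, mul_comm (g.1 1) _ ▸ hg1⟩
  left_inv u := Units.ext (mul_one _)
  right_inv g := Subtype.ext <| LinearEquiv.ext fun k ↦
    (apply_eq_apply_one_mul_of_commute_lmul hα g.2 k).symm

def conjLmulFiberEquivUnits (hα : Algebra.adjoin R {α} = ⊤) (ψ₀ : K ≃ₗ[R] V) :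
    {ψ : K ≃ₗ[R] V // ψ.conj (Algebra.lmul R K α) = ψ₀.conj (Algebra.lmul R K α)} ≃ Kˣ :=
  ((ψ₀.symm.transEquiv).subtypeEquiv fun ψ ↦ ψ.conj_eq_conj_iff_commute ψ₀ _).trans
    (unitsEquivCommuteLmul hα).symm

end Generator

theorem Nat.card_eq_card_mul_card_of_nonempty_fiber_equiv {α β γ : Type*} (Φ : α → β)
    (h : ∀ b, Nonempty ({a // Φ a = b} ≃ γ)) : Nat.card α = Nat.card β * Nat.card γ := by
  rw [← Nat.card_prod]
  exact Nat.card_congr <| (Equiv.sigmaFiberEquiv Φ).symm.trans <|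
    (Equiv.sigmaCongrRight fun b ↦ (h b).some).trans (Equiv.sigmaEquivProd β γ)

open AdjoinRoot

section AdjoinRoot

variable {F V : Type*} [Field F] [AddCommGroup V] [Module F V] [FiniteDimensional F V] {f : F[X]}

theorem finrank_adjoinRoot : finrank F (AdjoinRoot f) = f.natDegree :=
  finrank_quotient_span_eq_natDegree

theorem charpoly_conj_lmul_root (hf : f.Monic) (ψ : AdjoinRoot f ≃ₗ[F] V) :
    (ψ.conj (Algebra.lmul F (AdjoinRoot f) (root f))).charpoly = f := by
  let pb := powerBasis hf.ne_zero
  have := pb.finite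
  rw [LinearEquiv.charpoly_conj, ← LinearMap.charpoly_toMatrix _ pb.basis,
    ← Algebra.leftMulMatrix_apply, ← powerBasis_gen hf.ne_zero, charpoly_leftMulMatrix,
    minpoly_powerBasis_gen_of_monic hf]

theorem exists_linearEquiv_conj_lmul_root_eq (hf : Irreducible f)
    {T : Module.End F V} (hT : T.charpoly = f) :
    ∃ ψ : AdjoinRoot f ≃ₗ[F] V, ψ.conj (Algebra.lmul F (AdjoinRoot f) (root f)) = T := by
  have := Fact.mk hf
  have := (powerBasis hf.ne_zero).finite
  let φ : AdjoinRoot f →ₐ[F] Module.End F V :=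
    Ideal.Quotient.liftₐ _ (aeval T) fun p hp ↦ by
      obtain ⟨c, rfl⟩ := Ideal.mem_span_singleton'.mp hp
      rw [map_mul, ← hT, LinearMap.aeval_self_charpoly, mul_zero]
  have hdim : finrank F (AdjoinRoot f) = finrank F V := by
    rw [finrank_adjoinRoot, ← hT, LinearMap.charpoly_natDegree]
  have : Nontrivial V :=
    Module.nontrivial_of_finrank_pos (hdim ▸ finrank_adjoinRoot (F := F) ▸ hf.natDegree_pos)
  obtain ⟨v, hv⟩ := exists_ne (0 : V)
  let ev : AdjoinRoot f →ₗ[F] V := LinearMap.applyₗ v ∘ₗ φ.toLinearMap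
  have hev : Function.Injective ev := by
    refine (injective_iff_map_eq_zero ev).mpr fun k hk ↦ by_contra fun hk0 ↦ hv ?_
    simpa [ev, ← Module.End.mul_apply, ← map_mul, inv_mul_cancel₀ hk0] using congr(φ k⁻¹ $hk)
  let ψ := LinearEquiv.ofBijective ev
    ⟨hev, (LinearMap.injective_iff_surjective_of_finrank_eq_finrank hdim).mp hev⟩
  refine ⟨ψ, LinearMap.ext fun w ↦ ?_⟩
  obtain ⟨k, rfl⟩ := ψ.surjective w
  rw [LinearEquiv.conj_apply_apply, LinearEquiv.symm_apply_apply]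
  show φ (root f * k) v = T (φ k v)
  rw [map_mul, show φ (root f) = T from aeval_X T]
  rfl

theorem natCard_linearEquiv_adjoinRoot (hmonic : f.Monic) (hirr : Irreducible f) :
    Nat.card (AdjoinRoot f ≃ₗ[F] V) =
      Nat.card {T : Module.End F V // T.charpoly = f} * Nat.card (AdjoinRoot f)ˣ := by
  refine Nat.card_eq_card_mul_card_of_nonempty_fiber_equiv
    (fun ψ ↦ ⟨ψ.conj (Algebra.lmul F _ (root f)), charpoly_conj_lmul_root hmonic ψ⟩)
    fun ⟨T, hT⟩ ↦ ?_
  obtain ⟨ψ₀, rfl⟩ := exists_linearEquiv_conj_lmul_root_eq hirr hT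
  exact ⟨(Equiv.subtypeEquivRight fun ψ ↦ Subtype.ext_iff).trans
    (conjLmulFiberEquivUnits adjoinRoot_eq_top ψ₀)⟩

end AdjoinRoot

theorem natCard_linearEquiv_pi_eq_card_GL {F M : Type*} [Field F] [AddCommGroup M] [Module F M]
    [FiniteDimensional F M] {n : ℕ} (h : finrank F M = n) :
    Nat.card (M ≃ₗ[F] (Fin n → F)) = Nat.card (GL (Fin n) F) := by
  obtain ⟨e⟩ := FiniteDimensional.nonempty_linearEquiv_of_finrank_eq
    (h.trans (finrank_fin_fun F).symm)
  exact Nat.card_congr <| LinearEquiv.symmEquiv.trans <| e.transEquiv.trans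
    (Matrix.GeneralLinearGroup.toLin.trans
      (LinearMap.GeneralLinearGroup.generalLinearEquiv F _)).toEquiv.symm

theorem count_matrices_with_irreducible_charpoly
    (F : Type*) [Field F] [Fintype F] (q n : ℕ) (hq : Fintype.card F = q)
    (f : Polynomial F) (hmonic : f.Monic) (hirr : Irreducible f)
    (hdeg : f.natDegree = n) :
    Nat.card {M : Matrix (Fin n) (Fin n) F // M.charpoly = f} =
      ∏ i ∈ Finset.Ico 1 n, (q ^ n - q ^ i) := by
  have := Fact.mk hirr
  have := (powerBasis hirr.ne_zero).finite
  have hn : 0 < n := hdeg ▸ hirr.natDegree_pos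
  have hrank : finrank F (AdjoinRoot f) = n := finrank_adjoinRoot.trans hdeg
  have hunits : Nat.card (AdjoinRoot f)ˣ = q ^ n - 1 := by
    rw [Nat.card_units, Module.natCard_eq_pow_finrank (K := F), hrank, Nat.card_eq_fintype_card,
      hq]
  have hpos : 0 < q ^ n - 1 := Nat.sub_pos_of_lt (Nat.one_lt_pow hn.ne' (hq ▸ Fintype.one_lt_card))
  refine Nat.eq_of_mul_eq_mul_right hpos ?_
  calc Nat.card {M : Matrix (Fin n) (Fin n) F // M.charpoly = f} * (q ^ n - 1)
      = Nat.card {T : Module.End F (Fin n → F) // T.charpoly = f} * Nat.card (AdjoinRoot f)ˣ := by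
        rw [hunits, Nat.card_congr <| Matrix.toLin'.toEquiv.subtypeEquiv
          (q := fun T ↦ T.charpoly = f) fun M ↦ by simp]
    _ = Nat.card (AdjoinRoot f ≃ₗ[F] (Fin n → F)) :=
        (natCard_linearEquiv_adjoinRoot hmonic hirr).symm
    _ = ∏ i : Fin n, (q ^ n - q ^ (i : ℕ)) := by
        rw [natCard_linearEquiv_pi_eq_card_GL hrank, Matrix.card_GL_field, hq]
    _ = (∏ i ∈ Finset.Ico 1 n, (q ^ n - q ^ i)) * (q ^ n - 1) := by
        rw [Fin.prod_univ_eq_prod_range (fun i ↦ q ^ n - q ^ i), Finset.range_eq_Ico,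
          Finset.prod_eq_prod_Ico_succ_bot hn, pow_zero, mul_comm]
end

section
/- If M ∈ M_n(F_q) has irreducible characteristic polynomial, then the centralizer of M in M_n(F_q) has exactly q^n elements. -/
/-!
By Cayley–Hamilton the irreducible polynomial `χ = M.charpoly` annihilates `M`, so for
`v ≠ 0` the kernel of `p ↦ p(M) v` is exactly `(χ)`. Restricted to polynomials of degree
`< n = deg χ` this map is injective, hence onto `Fⁿ`: every nonzero vector is cyclic.
A matrix `A` commuting with `M` satisfies `A (p(M) v) = p(M) (A v)`, so it is determined
by `A v`, and any target `p(M) v` is attained by `A = p(M)`. Thus `A ↦ A v` identifies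
the centralizer with `Fⁿ`.
-/

open Polynomial Module

namespace Matrix

variable {K ι : Type*} [Field K] [Fintype ι] [DecidableEq ι] {M : Matrix ι ι K}

lemma nonempty_of_irreducible_charpoly (h : Irreducible M.charpoly) : Nonempty ι := by
  by_contra hι
  rw [not_nonempty_iff] at hι
  exact h.not_isUnit (by rw [charpoly_isEmpty]; exact isUnit_one)

theorem charpoly_dvd_of_aeval_mulVec_eq_zero (h : Irreducible M.charpoly) {v : ι → K}
    (hv : v ≠ 0) {p : K[X]} (hp : aeval M p *ᵥ v = 0) : M.charpoly ∣ p := by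
  refine (h.isCoprime_or_dvd p).resolve_left fun ⟨a, b, hab⟩ => hv ?_
  have hinv : aeval M b * aeval M p = 1 := by
    simpa [aeval_self_charpoly] using congrArg (aeval M) hab
  calc v = (aeval M b * aeval M p) *ᵥ v := by rw [hinv, one_mulVec]
    _ = 0 := by rw [← mulVec_mulVec, hp, mulVec_zero]

theorem exists_aeval_mulVec_eq (h : Irreducible M.charpoly) {v : ι → K} (hv : v ≠ 0)
    (w : ι → K) : ∃ p : K[X], aeval M p *ᵥ v = w := by
  let f : K[X] →ₗ[K] ι → K :=
    LinearMap.applyₗ v ∘ₗ toLinAlgEquiv'.toLinearMap ∘ₗ (aeval M).toLinearMap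
  let g := f ∘ₗ (degreeLT K (Fintype.card ι)).subtype
  have hg : Function.Injective g := by
    rw [← LinearMap.ker_eq_bot, LinearMap.ker_eq_bot']
    rintro ⟨p, hp⟩ hgp
    have hdvd := charpoly_dvd_of_aeval_mulVec_eq_zero h hv hgp
    rw [mem_degreeLT, ← M.charpoly_degree_eq_dim] at hp
    simpa using eq_zero_of_dvd_of_degree_lt hdvd hp
  have hrank : finrank K (degreeLT K (Fintype.card ι)) = finrank K (ι → K) := by
    rw [(degreeLTEquiv K _).finrank_eq]
    simp
  obtain ⟨⟨p, _⟩, hp⟩ :=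
    (LinearMap.injective_iff_surjective_of_finrank_eq_finrank hrank).mp hg w
  exact ⟨p, hp⟩

theorem mulVec_bijective_of_irreducible_charpoly (h : Irreducible M.charpoly) {v : ι → K}
    (hv : v ≠ 0) :
    Function.Bijective fun A : {A : Matrix ι ι K // A * M = M * A} => A.1 *ᵥ v := by
  have comm_aeval (A : {A : Matrix ι ι K // A * M = M * A}) (p : K[X]) :
      Commute A.1 (aeval M p) :=
    Algebra.commute_of_mem_adjoin_singleton_of_commute (aeval_mem_adjoin_singleton K M) A.2
  constructor
  · intro A B (hAB : A.1 *ᵥ v = B.1 *ᵥ v)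
    refine Subtype.ext <| ext_iff_mulVec.mpr fun w => ?_
    obtain ⟨p, rfl⟩ := exists_aeval_mulVec_eq h hv w
    rw [mulVec_mulVec, (comm_aeval A p).eq, ← mulVec_mulVec, hAB, mulVec_mulVec,
      ← (comm_aeval B p).eq, ← mulVec_mulVec]
  · intro w
    obtain ⟨p, rfl⟩ := exists_aeval_mulVec_eq h hv w
    exact ⟨⟨aeval M p, (comm_aeval ⟨M, rfl⟩ p).symm.eq⟩, rfl⟩

end Matrix

theorem card_centralizer_of_irreducible_charpoly
    (F : Type*) [Field F] [Fintype F] (q n : ℕ) (hq : Fintype.card F = q)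
    (M : Matrix (Fin n) (Fin n) F) (h : Irreducible M.charpoly) :
    Nat.card {A : Matrix (Fin n) (Fin n) F // A * M = M * A} = q ^ n := by
  have := Matrix.nonempty_of_irreducible_charpoly h
  obtain ⟨v, hv⟩ := exists_ne (0 : Fin n → F)
  rw [Nat.card_eq_of_bijective _ (Matrix.mulVec_bijective_of_irreducible_charpoly h hv),
    Nat.card_fun, Nat.card_eq_fintype_card, hq, Nat.card_fin]
end

section
/- If M ∈ M_n(F_q) has irreducible characteristic polynomial, then the centralizer (stabilizer under the conjugation action) of M in GL_n(F_q) has exactly q^n − 1 elements. -/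
/-!
Let `K = F[X]/(χ_M)`, a field with `q ^ n` elements since `χ_M` is irreducible of degree `n`.
Evaluation at `M` embeds `K` into the matrices commuting with `M`. Conversely, `K` acts on
`V = F ^ n`, and for `v ≠ 0` the map `c ↦ c • v` is injective, hence bijective as `|V| = |K|`.
A matrix `A` commuting with `M` is `K`-linear, so writing `A v = c • v` forces `A = c` on all of
`V = K • v`. The centralizer of `M` in `GL_n(F)` is therefore `Kˣ`.
-/

open Polynomial

section FieldAction

variable {K A V : Type*} [Field K] [Ring A] [AddCommGroup V] [Module A V]

theorem bijective_smul_of_card_le [Finite V] (Θ : K →+* A) (hcard : Nat.card V ≤ Nat.card K)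
    {v : V} (hv : v ≠ 0) : Function.Bijective fun c => Θ c • v := by
  refine Function.Injective.bijective_of_nat_card_le (fun c d hcd => ?_) hcard
  by_contra hne
  have hsub : Θ (c - d) • v = 0 := by rw [map_sub, sub_smul, hcd, sub_self]
  apply hv
  calc v = Θ ((c - d)⁻¹ * (c - d)) • v := by
        rw [inv_mul_cancel₀ (sub_ne_zero.mpr hne), map_one, one_smul]
    _ = 0 := by rw [map_mul, mul_smul, hsub, smul_zero]

theorem mem_range_of_forall_commute [Finite V] [Nontrivial V] [FaithfulSMul A V] (Θ : K →+* A)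
    (hcard : Nat.card V ≤ Nat.card K) {a : A} (ha : ∀ c, Commute a (Θ c)) : a ∈ Set.range Θ := by
  obtain ⟨v, hv⟩ := exists_ne (0 : V)
  have hbij := bijective_smul_of_card_le Θ hcard hv
  obtain ⟨c, hc : Θ c • v = a • v⟩ := hbij.surjective (a • v)
  refine ⟨c, FaithfulSMul.eq_of_smul_eq_smul (α := V) fun w => ?_⟩
  obtain ⟨d, rfl⟩ := hbij.surjective w
  calc Θ c • Θ d • v = Θ d • Θ c • v := by
        rw [← mul_smul, ← mul_smul, ← map_mul, ← map_mul, mul_comm]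
    _ = a • Θ d • v := by rw [hc, ← mul_smul, ← mul_smul, (ha d).eq]

end FieldAction

theorem natCard_units_subtype_mem_range {K A : Type*} [DivisionRing K] [Ring A] [Nontrivial A]
    (Θ : K →+* A) : Nat.card {u : Aˣ // (u : A) ∈ Set.range Θ} = Nat.card Kˣ := by
  refine (Nat.card_eq_of_bijective (fun c => ⟨Units.map Θ c, c, rfl⟩) ⟨fun c d hcd => ?_, ?_⟩).symm
  · exact Units.ext (Θ.injective (congrArg (fun u => ((u.1 : Aˣ) : A)) hcd))
  · rintro ⟨u, c, hc⟩
    have hc0 : c ≠ 0 := by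
      rintro rfl
      exact u.ne_zero (hc ▸ map_zero Θ)
    exact ⟨Units.mk0 c hc0, Subtype.ext (Units.ext hc)⟩

instance Matrix.faithfulSMul_mulVec {n R : Type*} [Fintype n] [DecidableEq n] [Semiring R] :
    FaithfulSMul (Matrix n n R) (n → R) :=
  ⟨Matrix.ext_iff_smul.mpr⟩

theorem AdjoinRoot.natCard_eq_pow_natDegree {F : Type*} [Field F] [Finite F] {f : F[X]}
    (hf : f ≠ 0) : Nat.card (AdjoinRoot f) = Nat.card F ^ f.natDegree := by
  have := (AdjoinRoot.powerBasis hf).finite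
  rw [Module.natCard_eq_pow_finrank (K := F), ← AdjoinRoot.powerBasis_dim hf, PowerBasis.finrank]

namespace AdjoinRoot

variable {R A : Type*} [CommRing R] [Ring A] [Algebra R A] {f : R[X]}

-- Unlike `AdjoinRoot.lift`, this allows a noncommutative target such as a matrix ring.
noncomputable def liftAeval (x : A) (hx : aeval x f = 0) : AdjoinRoot f →+* A :=
  Ideal.Quotient.lift _ (aeval x).toRingHom fun g hg => by
    obtain ⟨g, rfl⟩ := Ideal.mem_span_singleton.mp hg
    simp [hx]

variable {x : A} (hx : aeval x f = 0)

theorem liftAeval_mk (g : R[X]) : liftAeval x hx (mk f g) = aeval x g :=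
  Ideal.Quotient.lift_mk _ _ _

theorem liftAeval_root : liftAeval x hx (root f) = x := by
  rw [root, liftAeval_mk, aeval_X]

theorem forall_commute_liftAeval_iff {a : A} :
    (∀ c, Commute a (liftAeval x hx c)) ↔ Commute a x := by
  refine ⟨fun ha => liftAeval_root hx ▸ ha (root f), fun ha c => ?_⟩
  obtain ⟨g, rfl⟩ := mk_surjective c
  rw [liftAeval_mk]
  exact Algebra.commute_of_mem_adjoin_singleton_of_commute (aeval_mem_adjoin_singleton R x) ha

theorem commute_liftAeval (c : AdjoinRoot f) : Commute (liftAeval x hx c) x := by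
  simpa only [liftAeval_root] using (Commute.all c (root f)).map (liftAeval x hx)

end AdjoinRoot

theorem card_GL_centralizer_of_irreducible_charpoly
    (F : Type*) [Field F] [Fintype F] (q n : ℕ) (hq : Fintype.card F = q)
    (M : Matrix (Fin n) (Fin n) F) (h : Irreducible M.charpoly) :
    Nat.card {P : GL (Fin n) F // (P : Matrix (Fin n) (Fin n) F) * M = M * P} =
      q ^ n - 1 := by
  have : Fact (Irreducible M.charpoly) := ⟨h⟩
  have hdeg : M.charpoly.natDegree = n := by
    rw [Matrix.charpoly_natDegree_eq_dim, Fintype.card_fin]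
  have hcardK : Nat.card (AdjoinRoot M.charpoly) = q ^ n := by
    rw [AdjoinRoot.natCard_eq_pow_natDegree h.ne_zero, hdeg, Nat.card_eq_fintype_card, hq]
  have : Nonempty (Fin n) := ⟨⟨0, hdeg ▸ h.natDegree_pos⟩⟩
  have hcardV : Nat.card (Fin n → F) ≤ Nat.card (AdjoinRoot M.charpoly) := by
    rw [hcardK, Nat.card_fun, Nat.card_eq_fintype_card, hq, Nat.card_fin]
  let Θ := AdjoinRoot.liftAeval M M.aeval_self_charpoly
  have hcentralizer (P : Matrix (Fin n) (Fin n) F) : P * M = M * P ↔ P ∈ Set.range Θ :=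
    ⟨fun hP => mem_range_of_forall_commute Θ hcardV
        ((AdjoinRoot.forall_commute_liftAeval_iff _).mpr hP),
      fun ⟨c, hc⟩ => hc ▸ (AdjoinRoot.commute_liftAeval _ c).eq⟩
  calc Nat.card {P : GL (Fin n) F // (P : Matrix (Fin n) (Fin n) F) * M = M * P}
      = Nat.card {P : GL (Fin n) F // (P : Matrix (Fin n) (Fin n) F) ∈ Set.range Θ} :=
        Nat.card_congr (Equiv.subtypeEquivRight fun P => hcentralizer P)
    _ = q ^ n - 1 := by rw [natCard_units_subtype_mem_range, Nat.card_units, hcardK]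
end

section
/- Let F_q be a finite field and f a monic irreducible polynomial of degree n over F_q. The number of matrices in M_n(F_q) with characteristic polynomial f equals |GL_n(F_q)| / (q^n − 1). -/
/-!
For a matrix `M` whose characteristic polynomial `f` is irreducible and a vector `v ≠ 0`, the
vectors `v, M v, …, M ^ (n - 1) v` are linearly independent: a nonzero polynomial of degree
`< n` killing `v` would be coprime to `f`, and a Bézout identity then kills `v` itself. So they
are the columns of an invertible Krylov matrix. The map `(M, v) ↦ krylov M v` is a bijection
from pairs (matrix with characteristic polynomial `f`, nonzero vector) onto `GL_n(F_q)`: by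
Cayley–Hamilton these columns and `f` determine `M * krylov M v`, hence `M`; and conjugating one
such pair moves its Krylov matrix to any prescribed invertible matrix. Hence the number of
matrices times `q ^ n - 1` is `|GL_n(F_q)|`.
-/

open Polynomial

namespace Matrix

section CommRing

variable {R ι : Type*} [CommRing R] [Fintype ι] [DecidableEq ι] {n : ℕ}

noncomputable def aevalMulVec (M : Matrix ι ι R) (v : ι → R) : R[X] →ₗ[R] ι → R where
  toFun p := aeval M p *ᵥ v
  map_add' p q := by rw [map_add, add_mulVec]
  map_smul' c p := by rw [map_smul, smul_mulVec, RingHom.id_apply]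

@[simp]
theorem aevalMulVec_apply (M : Matrix ι ι R) (v : ι → R) (p : R[X]) :
    aevalMulVec M v p = aeval M p *ᵥ v :=
  rfl

theorem pow_mulVec_eq_of_charpoly_eq [Nontrivial R] {M N : Matrix ι ι R} {v : ι → R}
    (hχ : M.charpoly = N.charpoly) (h : ∀ j < Fintype.card ι, M ^ j *ᵥ v = N ^ j *ᵥ v)
    (k : ℕ) : M ^ k *ᵥ v = N ^ k *ᵥ v := by
  classical
  have hmod : X ^ k %ₘ M.charpoly ∈ degreeLT R (Fintype.card ι) := by
    rw [mem_degreeLT, ← M.charpoly_degree_eq_dim]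
    exact degree_modByMonic_lt _ M.charpoly_monic
  have hagree : degreeLT R (Fintype.card ι) ≤
      LinearMap.eqLocus (aevalMulVec M v) (aevalMulVec N v) := by
    rw [degreeLT_eq_span_X_pow, Submodule.span_le]
    simp only [Finset.coe_image, Finset.coe_range, Set.image_subset_iff]
    intro j hj
    simpa using h j hj
  have := hagree hmod
  rwa [LinearMap.mem_eqLocus, aevalMulVec_apply, aevalMulVec_apply, ← pow_eq_aeval_mod_charpoly,
    hχ, ← pow_eq_aeval_mod_charpoly] at this

def krylov (M : Matrix (Fin n) (Fin n) R) (v : Fin n → R) : Matrix (Fin n) (Fin n) R :=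
  of fun i j => (M ^ (j : ℕ) *ᵥ v) i

theorem krylov_units_conj (u : (Matrix (Fin n) (Fin n) R)ˣ) (M : Matrix (Fin n) (Fin n) R)
    (v : Fin n → R) :
    krylov (u.val * M * u⁻¹.val) (u.val *ᵥ v) = u.val * krylov M v :=
  ext_col fun j =>
    show (u.val * M * u⁻¹.val) ^ (j : ℕ) *ᵥ (u.val *ᵥ v) = u.val *ᵥ (M ^ (j : ℕ) *ᵥ v) by
      rw [Units.conj_pow, mulVec_mulVec, mul_assoc, Units.inv_mul, mul_one, mulVec_mulVec]

theorem mul_krylov (M : Matrix (Fin n) (Fin n) R) (v : Fin n → R) :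
    M * krylov M v = of fun i (j : Fin n) => (M ^ ((j : ℕ) + 1) *ᵥ v) i :=
  ext_col fun j => show M *ᵥ (M ^ (j : ℕ) *ᵥ v) = M ^ ((j : ℕ) + 1) *ᵥ v by
    rw [mulVec_mulVec, pow_succ']

theorem eq_of_krylov_eq [Nontrivial R] {M N : Matrix (Fin n) (Fin n) R} {v w : Fin n → R}
    (hχ : M.charpoly = N.charpoly) (hK : IsUnit (krylov M v)) (h : krylov M v = krylov N w) :
    M = N ∧ v = w := by
  have hcol (j : Fin n) : M ^ (j : ℕ) *ᵥ v = N ^ (j : ℕ) *ᵥ w := congrArg (·.col j) h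
  obtain rfl : v = w := funext fun i => by simpa using congrFun (hcol ⟨0, i.pos⟩) i
  have hpow := pow_mulVec_eq_of_charpoly_eq hχ fun j hj => hcol ⟨j, by simpa using hj⟩
  refine ⟨hK.mul_left_inj.mp ?_, rfl⟩
  rw [mul_krylov, h, mul_krylov]
  simp only [hpow]

end CommRing

section Field

variable {F ι : Type*} [Field F] [Fintype ι] [DecidableEq ι] {n : ℕ}

theorem charpoly_dvd_of_aevalMulVec_eq_zero {M : Matrix ι ι F} (hM : Irreducible M.charpoly)
    {v : ι → F} (hv : v ≠ 0) {p : F[X]} (hp : aevalMulVec M v p = 0) : M.charpoly ∣ p := by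
  by_contra hdvd
  obtain ⟨a, b, hab⟩ := hM.coprime_iff_not_dvd.mpr hdvd
  rw [aevalMulVec_apply] at hp
  apply hv
  calc v = aeval M (a * M.charpoly + b * p) *ᵥ v := by rw [hab, map_one, one_mulVec]
    _ = 0 := by
      rw [map_add, map_mul, map_mul, aeval_self_charpoly, mul_zero, zero_add, ← mulVec_mulVec,
        hp, mulVec_zero]

theorem linearIndependent_pow_mulVec {M : Matrix (Fin n) (Fin n) F}
    (hM : Irreducible M.charpoly) {v : Fin n → F} (hv : v ≠ 0) :
    LinearIndependent F fun j : Fin n => M ^ (j : ℕ) *ᵥ v := by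
  have hX : LinearIndependent F fun j : Fin n => (X : F[X]) ^ (j : ℕ) := by
    simpa [coe_basisMonomials, monomial_one_right_eq_X_pow, Function.comp_def] using
      (basisMonomials F).linearIndependent.comp _ Fin.val_injective
  have hspan : Submodule.span F (Set.range fun j : Fin n => (X : F[X]) ^ (j : ℕ)) ≤
      degreeLT F n :=
    Submodule.span_le.mpr <| Set.range_subset_iff.mpr fun j => by simp [mem_degreeLT]
  have := hX.map (f := aevalMulVec M v) <| Submodule.disjoint_def.mpr fun p hp hker =>
    eq_zero_of_dvd_of_degree_lt (charpoly_dvd_of_aevalMulVec_eq_zero hM hv hker) <| by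
      rw [M.charpoly_degree_eq_dim, Fintype.card_fin]
      exact mem_degreeLT.mp (hspan hp)
  simpa [Function.comp_def] using this

theorem isUnit_krylov {M : Matrix (Fin n) (Fin n) F} (hM : Irreducible M.charpoly)
    {v : Fin n → F} (hv : v ≠ 0) : IsUnit (krylov M v) :=
  linearIndependent_cols_iff_isUnit.mp (linearIndependent_pow_mulVec hM hv)

theorem exists_charpoly_eq {f : F[X]} (hf : f.Monic) (hdeg : f.natDegree = n) :
    ∃ M : Matrix (Fin n) (Fin n) F, M.charpoly = f := by
  let pb := AdjoinRoot.powerBasis hf.ne_zero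
  have hdim : pb.dim = n := (AdjoinRoot.powerBasis_dim hf.ne_zero).trans hdeg
  refine ⟨reindex (finCongr hdim) (finCongr hdim) (Algebra.leftMulMatrix pb.basis pb.gen), ?_⟩
  rw [charpoly_reindex, charpoly_leftMulMatrix, AdjoinRoot.minpoly_powerBasis_gen_of_monic hf]

noncomputable def krylovUnit {f : F[X]} (hf : Irreducible f)
    (Mv : {M : Matrix (Fin n) (Fin n) F // M.charpoly = f} × {v : Fin n → F // v ≠ 0}) :
    GL (Fin n) F :=
  (isUnit_krylov (Mv.1.2 ▸ hf) Mv.2.2).unit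

theorem krylovUnit_injective {f : F[X]} (hf : Irreducible f) :
    Function.Injective (krylovUnit (n := n) hf) := by
  rintro ⟨⟨M, hM⟩, ⟨v, hv⟩⟩ ⟨⟨N, hN⟩, ⟨w, _⟩⟩ h
  obtain ⟨rfl, rfl⟩ := eq_of_krylov_eq (hM.trans hN.symm) (isUnit_krylov (hM ▸ hf) hv)
    (congrArg Units.val h)
  rfl

theorem krylovUnit_surjective {f : F[X]} (hmonic : f.Monic) (hf : Irreducible f)
    (hdeg : f.natDegree = n) : Function.Surjective (krylovUnit (n := n) hf) := by
  intro g
  obtain ⟨C, hC⟩ := exists_charpoly_eq hmonic hdeg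
  have : NeZero n := ⟨(hdeg ▸ hf.natDegree_pos).ne'⟩
  obtain ⟨e, he⟩ := exists_ne (0 : Fin n → F)
  let K := (isUnit_krylov (hC ▸ hf) he).unit
  let u := g * K⁻¹
  have hue : u.val *ᵥ e ≠ 0 := fun h =>
    he (mulVec_injective_iff_isUnit.mpr u.isUnit (h.trans (mulVec_zero _).symm))
  refine ⟨⟨⟨u.val * C * u⁻¹.val, by simpa [coe_units_inv] using hC⟩, ⟨_, hue⟩⟩, Units.ext ?_⟩
  show krylov _ _ = _
  rw [krylov_units_conj]
  exact congrArg Units.val (inv_mul_cancel_right g K)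

end Field

end Matrix

theorem count_matrices_eq_card_GL_div
    (F : Type*) [Field F] [Fintype F] (q n : ℕ) (hq : Fintype.card F = q)
    (f : Polynomial F) (hmonic : f.Monic) (hirr : Irreducible f)
    (hdeg : f.natDegree = n) :
    Nat.card {M : Matrix (Fin n) (Fin n) F // M.charpoly = f} =
      Nat.card (GL (Fin n) F) / (q ^ n - 1) := by
  have hn : 0 < n := hdeg ▸ hirr.natDegree_pos
  have hcard := Nat.card_congr <| Equiv.ofBijective _
    ⟨Matrix.krylovUnit_injective hirr, Matrix.krylovUnit_surjective hmonic hirr hdeg⟩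
  have hvec : Nat.card {v : Fin n → F // v ≠ 0} = q ^ n - 1 := by
    classical
    simp [Nat.card_eq_fintype_card, Fintype.card_subtype_compl, hq]
  have hpos : 0 < q ^ n - 1 :=
    Nat.sub_pos_of_lt (Nat.one_lt_pow hn.ne' (hq ▸ Fintype.one_lt_card))
  rw [Nat.card_prod, hvec] at hcard
  rw [← hcard, Nat.mul_div_cancel _ hpos]
end

section
/- For M ∈ M_n(F) with irreducible characteristic polynomial, the centralizer of M in GL_n(F_q) equals the set of nonzero elements of F[M], and is a cyclic group of order q^n − 1 when F = F_q. -/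
/-!
If `χ_M` is irreducible, `p ↦ p(M)` embeds the field `L = F[X]/(χ_M)`, of dimension `n` over
`F`, onto `F[M]`. For any `v ≠ 0` the map `x ↦ x(M) v` from `L` to `Fⁿ` is injective because `L`
is a field, hence bijective by counting dimensions. A matrix `P` commuting with `M` commutes with
all of `F[M]`, so it is determined by `P v`; choosing `x` with `x(M) v = P v` gives `P = x(M)`.
The centralizer of `M` in `GL_n(F)` is therefore the image of `Lˣ`, the cyclic group of units of
a field with `q ^ n` elements.
-/

open Polynomial Module

namespace Matrix

variable {F n : Type*} [Field F] [Fintype n] [DecidableEq n]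

theorem nonempty_of_irreducible_charpoly_s15 {M : Matrix n n F} (h : Irreducible M.charpoly) :
    Nonempty n := by
  by_contra hn
  rw [not_nonempty_iff] at hn
  exact h.not_isUnit (charpoly_isEmpty (A := M) ▸ isUnit_one)

theorem finrank_adjoinRoot_charpoly (M : Matrix n n F) :
    finrank F (AdjoinRoot M.charpoly) = Fintype.card n :=
  finrank_quotient_span_eq_natDegree.trans M.charpoly_natDegree_eq_dim

instance (M : Matrix n n F) : Module.Finite F (AdjoinRoot M.charpoly) :=
  M.charpoly_monic.finite_adjoinRoot

/-- Evaluation at `M`, which is well defined on `F[X]/(χ_M)` by Cayley–Hamilton. -/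
noncomputable def aevalCharpoly (M : Matrix n n F) : AdjoinRoot M.charpoly →ₐ[F] Matrix n n F :=
  Ideal.Quotient.liftₐ _ (aeval M) fun p hp => by
    obtain ⟨r, rfl⟩ := Ideal.mem_span_singleton'.mp hp
    rw [map_mul, aeval_self_charpoly, mul_zero]

theorem range_aevalCharpoly (M : Matrix n n F) :
    (aevalCharpoly M).range = Algebra.adjoin F {M} := by
  rw [Algebra.adjoin_singleton_eq_range_aeval]
  ext A
  constructor
  · rintro ⟨x, rfl⟩
    obtain ⟨p, rfl⟩ := AdjoinRoot.mk_surjective x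
    exact ⟨p, rfl⟩
  · rintro ⟨p, rfl⟩
    exact ⟨AdjoinRoot.mk _ p, rfl⟩

section Irreducible

variable {M : Matrix n n F} [Fact (Irreducible M.charpoly)]

theorem aevalCharpoly_injective : Function.Injective (aevalCharpoly M) :=
  have := nonempty_of_irreducible_charpoly_s15 (Fact.out : Irreducible M.charpoly)
  (aevalCharpoly M).toRingHom.injective

theorem bijective_aevalCharpoly_mulVec {v : n → F} (hv : v ≠ 0) :
    Function.Bijective fun x => aevalCharpoly M x *ᵥ v := by
  let f : AdjoinRoot M.charpoly →ₗ[F] n → F :=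
    LinearMap.applyₗ v ∘ₗ toLin'.toLinearMap ∘ₗ (aevalCharpoly M).toLinearMap
  have hinj : Function.Injective f := by
    rw [← LinearMap.ker_eq_bot, LinearMap.ker_eq_bot']
    intro x hx
    by_contra hx0
    apply hv
    simpa [f, mulVec_mulVec, ← map_mul, inv_mul_cancel₀ hx0] using
      congrArg (aevalCharpoly M x⁻¹ *ᵥ ·) hx
  have hrank : finrank F (AdjoinRoot M.charpoly) = finrank F (n → F) := by
    rw [finrank_adjoinRoot_charpoly, finrank_fintype_fun_eq_card]
  exact ⟨hinj, (LinearMap.injective_iff_surjective_of_finrank_eq_finrank hrank).mp hinj⟩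

theorem eq_aevalCharpoly_of_commute {P : Matrix n n F} (hP : Commute P M) {v : n → F}
    (hv : v ≠ 0) {x : AdjoinRoot M.charpoly} (hx : P *ᵥ v = aevalCharpoly M x *ᵥ v) :
    P = aevalCharpoly M x := by
  refine ext_of_mulVec_single fun i => ?_
  obtain ⟨y, hy⟩ := (bijective_aevalCharpoly_mulVec (M := M) hv).2 (Pi.single i 1)
  have hPy : Commute P (aevalCharpoly M y) :=
    Algebra.commute_of_mem_adjoin_singleton_of_commute
      (range_aevalCharpoly M ▸ AlgHom.mem_range_self _ y) hP
  calc P *ᵥ Pi.single i 1 = aevalCharpoly M y *ᵥ (P *ᵥ v) := by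
        rw [← hy, mulVec_mulVec, hPy.eq, ← mulVec_mulVec]
    _ = aevalCharpoly M (x * y) *ᵥ v := by rw [hx, mulVec_mulVec, ← map_mul, mul_comm]
    _ = aevalCharpoly M x *ᵥ Pi.single i 1 := by rw [← hy, mulVec_mulVec, map_mul]

end Irreducible

theorem centralizer_singleton_eq_adjoin {M : Matrix n n F} (h : Irreducible M.charpoly) :
    Subalgebra.centralizer F {M} = Algebra.adjoin F {M} := by
  have : Fact (Irreducible M.charpoly) := ⟨h⟩
  have := nonempty_of_irreducible_charpoly_s15 h
  refine le_antisymm (fun P hP => ?_) fun P hP => ?_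
  · have hPM : Commute P M := ((Subalgebra.mem_centralizer_iff F).mp hP M rfl).symm
    obtain ⟨v, hv⟩ := exists_ne (0 : n → F)
    obtain ⟨x, hx⟩ := (bijective_aevalCharpoly_mulVec (M := M) hv).2 (P *ᵥ v)
    rw [← range_aevalCharpoly, eq_aevalCharpoly_of_commute hPM hv hx.symm]
    exact AlgHom.mem_range_self _ x
  · rw [Subalgebra.mem_centralizer_iff]
    rintro _ rfl
    exact Algebra.commute_of_mem_adjoin_self hP

end Matrix

theorem RingHom.mem_range_unitsMap_iff {K R : Type*} [DivisionRing K] [Ring R] [Nontrivial R]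
    (f : K →+* R) (u : Rˣ) : u ∈ (Units.map (f : K →* R)).range ↔ (u : R) ∈ f.range := by
  constructor
  · rintro ⟨v, rfl⟩
    exact ⟨v, rfl⟩
  · rintro ⟨x, hx⟩
    have hx0 : x ≠ 0 := by
      rintro rfl
      exact u.ne_zero (by rw [← hx, map_zero])
    exact ⟨Units.mk0 x hx0, Units.ext hx⟩

theorem GL_centralizer_structure_of_irreducible_charpoly
    (F : Type*) [Field F] [Fintype F] (q n : ℕ) (hq : Fintype.card F = q)
    (M : Matrix (Fin n) (Fin n) F) (h : Irreducible M.charpoly) :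
    (∀ P : GL (Fin n) F,
        (P : Matrix (Fin n) (Fin n) F) * M = M * P ↔
          (P : Matrix (Fin n) (Fin n) F) ∈ Algebra.adjoin F {M} ∧
            (P : Matrix (Fin n) (Fin n) F) ≠ 0) ∧
      ∃ H : Subgroup (GL (Fin n) F),
        (∀ P : GL (Fin n) F,
          P ∈ H ↔ (P : Matrix (Fin n) (Fin n) F) * M = M * P) ∧
        IsCyclic H ∧ Nat.card H = q ^ n - 1 := by
  have : Fact (Irreducible M.charpoly) := ⟨h⟩
  have := Matrix.nonempty_of_irreducible_charpoly_s15 h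
  have hcomm (P : Matrix (Fin n) (Fin n) F) : P * M = M * P ↔ P ∈ Algebra.adjoin F {M} := by
    rw [← Matrix.centralizer_singleton_eq_adjoin h, Subalgebra.mem_centralizer_iff]
    simp [eq_comm]
  let j := Units.map (Matrix.aevalCharpoly M : AdjoinRoot M.charpoly →* Matrix (Fin n) (Fin n) F)
  have hj : Function.Injective j := Units.map_injective Matrix.aevalCharpoly_injective
  refine ⟨fun P => (hcomm P).trans (and_iff_left P.ne_zero).symm, j.range, fun P => ?_, ?_, ?_⟩
  · rw [hcomm, ← Matrix.range_aevalCharpoly]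
    exact (Matrix.aevalCharpoly M).toRingHom.mem_range_unitsMap_iff P
  · have : Finite (AdjoinRoot M.charpoly) := Module.finite_of_finite F
    exact isCyclic_of_surjective _ (MonoidHom.ofInjective hj).surjective
  · rw [← Nat.card_congr (MonoidHom.ofInjective hj).toEquiv, Nat.card_units,
      Module.natCard_eq_pow_finrank (K := F), Matrix.finrank_adjoinRoot_charpoly,
      Nat.card_eq_fintype_card, hq, Fintype.card_fin]
end

section
/- The number of monic irreducible polynomials of degree n over F_q times ∏_{i=1}^{n-1}(q^n − q^i) equals the number of matrices in M_n(F_q) whose characteristic polynomial is irreducible. -/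
/-!
Let `f` be monic irreducible of degree `n`, `K = F[X]/(f) = F(α)` and `V = Fⁿ`. A pair
`(T, v)` with `χ_T = f` and `v ≠ 0` gives the `F`-linear map `K → V`, `p(α) ↦ p(T) v`. It is
injective, since a nonzero `p(α)` is invertible in `K` and hence `p(T)` is invertible, so it
is an isomorphism. Conversely an isomorphism `e : K ≃ V` comes from exactly one pair, namely
`(e ∘ (α * ·) ∘ e⁻¹, e 1)`. Hence `#{T | χ_T = f} · (qⁿ - 1) = |GLₙ(F)| = ∏_{i<n} (qⁿ - qⁱ)`:
every such `f` is the characteristic polynomial of `∏_{0<i<n} (qⁿ - qⁱ)` matrices, and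
summing over `f` gives the count.
-/

open Polynomial Module

theorem Nat.card_sigma_of_forall_card_eq {α : Type*} {β : α → Type*} [Finite (Σ a, β a)]
    {c : ℕ} (hc : 0 < c) (h : ∀ a, Nat.card (β a) = c) :
    Nat.card (Σ a, β a) = Nat.card α * c := by
  have : Finite α := Finite.of_surjective Sigma.fst fun a =>
    ⟨⟨a, (Nat.card_pos_iff.1 (h a ▸ hc)).1.some⟩, rfl⟩
  have := Fintype.ofFinite α
  have (a : α) : Finite (β a) := Finite.of_injective (Sigma.mk a) sigma_mk_injective
  rw [Nat.card_sigma, Finset.sum_congr rfl fun a _ => h a, Finset.sum_const, Finset.card_univ,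
    smul_eq_mul, Nat.card_eq_fintype_card]

theorem natCard_linearEquiv_eq_card_GL {F V W : Type*} [Field F]
    [AddCommGroup V] [Module F V] [FiniteDimensional F V]
    [AddCommGroup W] [Module F W] [FiniteDimensional F W] {n : ℕ}
    (hV : finrank F V = n) (hW : finrank F W = n) :
    Nat.card (V ≃ₗ[F] W) = Nat.card (GL (Fin n) F) := by
  let eV := (finBasisOfFinrankEq F V hV).equivFun
  let eW := (finBasisOfFinrankEq F W hW).equivFun
  let c : (V ≃ₗ[F] W) ≃ ((Fin n → F) ≃ₗ[F] (Fin n → F)) :=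
    { toFun e := eV.symm ≪≫ₗ e ≪≫ₗ eW
      invFun e := eV ≪≫ₗ e ≪≫ₗ eW.symm
      left_inv e := by ext; simp
      right_inv e := by ext; simp }
  rw [Nat.card_congr c, Nat.card_congr (Matrix.GeneralLinearGroup.toLin.trans
    (LinearMap.GeneralLinearGroup.generalLinearEquiv F (Fin n → F))).toEquiv]

theorem Module.natCard_subtype_ne_zero {F V : Type*} [Field F] [Fintype F] [AddCommGroup V]
    [Module F V] [FiniteDimensional F V] :
    Nat.card {v : V // v ≠ 0} = Fintype.card F ^ finrank F V - 1 := by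
  classical
  have := Module.fintypeOfFintype (finBasis F V)
  simp [Nat.card_eq_fintype_card, Module.card_eq_pow_finrank (K := F) (V := V)]

namespace PowerBasis

section

variable {F K V : Type*} [Field F] [Field K] [Algebra F K] [AddCommGroup V] [Module F V]
  (pb : PowerBasis F K)

noncomputable def orbitMap (T : Module.End F V) (hT : aeval T (minpoly F pb.gen) = 0) (v : V) :
    K →ₗ[F] V :=
  LinearMap.applyₗ v ∘ₗ (pb.lift T hT).toLinearMap

theorem charpoly_lmul_gen [FiniteDimensional F K] :
    (Algebra.lmul F K pb.gen).charpoly = minpoly F pb.gen := by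
  rw [← LinearMap.charpoly_toMatrix _ pb.basis, ← Algebra.leftMulMatrix_apply,
    charpoly_leftMulMatrix]

variable {pb} {T : Module.End F V} {hT : aeval T (minpoly F pb.gen) = 0} {v : V}

theorem orbitMap_apply (x : K) : pb.orbitMap T hT v x = pb.lift T hT x v := rfl

theorem orbitMap_one : pb.orbitMap T hT v 1 = v := by
  simp [orbitMap_apply]

theorem orbitMap_gen_mul (x : K) :
    pb.orbitMap T hT v (pb.gen * x) = T (pb.orbitMap T hT v x) := by
  simp [orbitMap_apply, lift_gen]

theorem orbitMap_injective (hv : v ≠ 0) : Function.Injective (pb.orbitMap T hT v) := by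
  refine (injective_iff_map_eq_zero _).2 fun x hx => ?_
  by_contra hx0
  have hunit : IsUnit (pb.lift T hT x) := (isUnit_iff_ne_zero.2 hx0).map _
  exact hv (((Module.End.isUnit_iff _).1 hunit).1 (by rw [← orbitMap_apply, hx, map_zero]))

theorem orbitMap_conj_lmul_gen (e : K ≃ₗ[F] V)
    (h : aeval (e.conj (Algebra.lmul F K pb.gen)) (minpoly F pb.gen) = 0) :
    pb.orbitMap (e.conj (Algebra.lmul F K pb.gen)) h (e 1) = e.toLinearMap := by
  have hlift : pb.lift _ h = (e.conjAlgEquiv F).toAlgHom.comp (Algebra.lmul F K) :=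
    pb.algHom_ext (by rw [lift_gen]; rfl)
  ext x
  rw [LinearEquiv.coe_coe, orbitMap_apply, hlift]
  simp

theorem conj_lmul_gen_eq (e : K ≃ₗ[F] V) (he : ∀ x, e (pb.gen * x) = T (e x)) :
    e.conj (Algebra.lmul F K pb.gen) = T := by
  ext y
  obtain ⟨x, rfl⟩ := e.surjective y
  simp [he]

end

section

variable {F K V : Type*} [Field F] [Field K] [Algebra F K] [FiniteDimensional F K]
  [AddCommGroup V] [Module F V] [FiniteDimensional F V] (pb : PowerBasis F K)

noncomputable def cyclicPairEquiv (hdim : Module.finrank F K = Module.finrank F V) :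
    {T : Module.End F V // T.charpoly = minpoly F pb.gen} × {v : V // v ≠ 0} ≃
      (K ≃ₗ[F] V) where
  toFun p := LinearMap.linearEquivOfInjective
      (pb.orbitMap p.1.1 (by simpa [p.1.2] using p.1.1.aeval_self_charpoly) p.2.1)
      (orbitMap_injective p.2.2) hdim
  invFun e := (⟨e.conj (Algebra.lmul F K pb.gen), by
      rw [LinearEquiv.charpoly_conj, charpoly_lmul_gen]⟩, ⟨e 1, by simp⟩)
  left_inv p := Prod.ext (Subtype.ext (conj_lmul_gen_eq _ fun _ => orbitMap_gen_mul _))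
    (Subtype.ext orbitMap_one)
  right_inv e := LinearEquiv.toLinearMap_injective (orbitMap_conj_lmul_gen e _)

theorem natCard_charpoly_eq_minpoly_mul [Fintype F]
    (hdim : Module.finrank F K = Module.finrank F V) :
    Nat.card {T : Module.End F V // T.charpoly = minpoly F pb.gen} *
        (Fintype.card F ^ Module.finrank F V - 1) =
      ∏ i : Fin (Module.finrank F V),
        (Fintype.card F ^ Module.finrank F V - Fintype.card F ^ (i : ℕ)) := by
  rw [← Module.natCard_subtype_ne_zero, ← Nat.card_prod,
    Nat.card_congr (pb.cyclicPairEquiv hdim), natCard_linearEquiv_eq_card_GL hdim rfl,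
    Matrix.card_GL_field]

end

end PowerBasis

theorem Matrix.natCard_charpoly_eq_of_irreducible {F : Type*} [Field F] [Fintype F] {f : F[X]}
    (hirr : Irreducible f) (hmon : f.Monic) {n : ℕ} (hdeg : f.natDegree = n) :
    Nat.card {M : Matrix (Fin n) (Fin n) F // M.charpoly = f} =
      ∏ i ∈ Finset.Ico 1 n, (Fintype.card F ^ n - Fintype.card F ^ i) := by
  have := Fact.mk hirr
  let pb := AdjoinRoot.powerBasis hirr.ne_zero
  have := pb.finite
  have hdim : finrank F (AdjoinRoot f) = finrank F (Fin n → F) := by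
    rw [pb.finrank, AdjoinRoot.powerBasis_dim, hdeg, finrank_fin_fun]
  have key := pb.natCard_charpoly_eq_minpoly_mul hdim
  have hn : 0 < n := hdeg ▸ hirr.natDegree_pos
  have hmat : Nat.card {M : Matrix (Fin n) (Fin n) F // M.charpoly = f} =
      Nat.card {T : Module.End F (Fin n → F) // T.charpoly = f} :=
    Nat.card_congr (Matrix.toLin'.toEquiv.subtypeEquiv fun M => by simp)
  rw [AdjoinRoot.minpoly_powerBasis_gen_of_monic hmon, finrank_fin_fun, ← hmat,
    Fin.prod_univ_eq_prod_range (fun i => Fintype.card F ^ n - Fintype.card F ^ i),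
    Finset.prod_range_eq_mul_Ico _ hn, pow_zero, mul_comm] at key
  exact Nat.eq_of_mul_eq_mul_left
    (Nat.sub_pos_of_lt (Nat.one_lt_pow hn.ne' Fintype.one_lt_card)) key

theorem count_matrices_with_some_irreducible_charpoly
    (F : Type*) [Field F] [Fintype F] (q n : ℕ) (hq : Fintype.card F = q) :
    Nat.card {f : Polynomial F // f.Monic ∧ Irreducible f ∧ f.natDegree = n} *
        ∏ i ∈ Finset.Ico 1 n, (q ^ n - q ^ i) =
      Nat.card {M : Matrix (Fin n) (Fin n) F // Irreducible M.charpoly} := by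
  subst hq
  let e : (Σ f : {f : F[X] // f.Monic ∧ Irreducible f ∧ f.natDegree = n},
      {M : Matrix (Fin n) (Fin n) F // M.charpoly = f}) ≃
      {M : Matrix (Fin n) (Fin n) F // Irreducible M.charpoly} :=
    Equiv.sigmaSubtypeFiberEquivSubtype Matrix.charpoly fun M =>
      ⟨fun h => ⟨M.charpoly_monic, h, by simp⟩, fun h => h.2.1⟩
  have := Finite.of_equiv _ e.symm
  have hprod_pos : 0 < ∏ i ∈ Finset.Ico 1 n, (Fintype.card F ^ n - Fintype.card F ^ i) :=
    Finset.prod_pos fun i hi => Nat.sub_pos_of_lt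
      (Nat.pow_lt_pow_right Fintype.one_lt_card (Finset.mem_Ico.1 hi).2)
  rw [← Nat.card_congr e, Nat.card_sigma_of_forall_card_eq hprod_pos fun f =>
    Matrix.natCard_charpoly_eq_of_irreducible f.2.2.1 f.2.1 f.2.2.2]
end
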